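/- Let L' be the lattice in ℝ⁴ generated by ℤ⁴ together with (1/2,1/2,0,0), (0,0,1/2,1/2), and (1/4,1/4,1/4,1/4). Then the number of vectors in L' of ℓ¹-norm exactly 1 equals 20, and the minimum ℓ¹-norm of a nonzero vector of L' equals 1. -/

import Mathlib

def l1 {n : ℕ} (x : Fin n → ℝ) : ℝ := ∑ i, |x i|

/-- Integer vectors in `ℝ⁴`. -/
def Zlat4 : Set (Fin 4 → ℝ) := {x | ∀ i, ∃ m : ℤ, x i = (m : ℝ)}

/-- The lattice `L'` generated by `ℤ⁴`, `(1/2,1/2,0,0)`, `(0,0,1/2,1/2)` and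
`(1/4,1/4,1/4,1/4)`. -/
def L' : AddSubgroup (Fin 4 → ℝ) :=
  AddSubgroup.closure (Zlat4 ∪
    {![1/2, 1/2, 0, 0], ![0, 0, 1/2, 1/2], ![1/4, 1/4, 1/4, 1/4]})

def Sgp : AddSubgroup (Fin 4 → ℝ) where
  carrier := {x | ∃ a b c d : ℤ, 4 * x 0 = a ∧ 4 * x 1 = b ∧ 4 * x 2 = c ∧ 4 * x 3 = d ∧
    4 ∣ b - a ∧ 2 ∣ c - a ∧ 4 ∣ d - c}
  zero_mem' := ⟨0, 0, 0, 0, by norm_num⟩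
  add_mem' := by
    rintro x y ⟨a,b,c,d, hx0,hx1,hx2,hx3, h1,h2,h3⟩ ⟨a',b',c',d', hy0,hy1,hy2,hy3, h1',h2',h3'⟩
    refine ⟨a+a', b+b', c+c', d+d', ?_, ?_, ?_, ?_, ?_, ?_, ?_⟩
    · push_cast; simp only [Pi.add_apply]; linarith
    · push_cast; simp only [Pi.add_apply]; linarith
    · push_cast; simp only [Pi.add_apply]; linarith
    · push_cast; simp only [Pi.add_apply]; linarith
    · omega
    · omega
    · omega
  neg_mem' := by
    rintro x ⟨a,b,c,d, hx0,hx1,hx2,hx3, h1,h2,h3⟩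
    refine ⟨-a, -b, -c, -d, ?_, ?_, ?_, ?_, ?_, ?_, ?_⟩
    · push_cast; simp only [Pi.neg_apply]; linarith
    · push_cast; simp only [Pi.neg_apply]; linarith
    · push_cast; simp only [Pi.neg_apply]; linarith
    · push_cast; simp only [Pi.neg_apply]; linarith
    · omega
    · omega
    · omega

lemma memL'_iff (x : Fin 4 → ℝ) :
    x ∈ L' ↔ ∃ a b c d : ℤ, 4 * x 0 = a ∧ 4 * x 1 = b ∧ 4 * x 2 = c ∧ 4 * x 3 = d ∧
      4 ∣ b - a ∧ 2 ∣ c - a ∧ 4 ∣ d - c := by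
  constructor
  · intro hx
    have : L' ≤ Sgp := by
      rw [L', AddSubgroup.closure_le]
      rintro y (hy | hy)
      · obtain ⟨m0, h0⟩ := hy 0
        obtain ⟨m1, h1⟩ := hy 1
        obtain ⟨m2, h2⟩ := hy 2
        obtain ⟨m3, h3⟩ := hy 3
        exact ⟨4*m0, 4*m1, 4*m2, 4*m3, by push_cast; linarith, by push_cast; linarith,
          by push_cast; linarith, by push_cast; linarith, by omega, by omega, by omega⟩
      · simp only [Set.mem_insert_iff, Set.mem_singleton_iff] at hy
        rcases hy with rfl | rfl | rfl
        · exact ⟨2, 2, 0, 0, by norm_num, by norm_num, by norm_num [Matrix.cons_val_two, Matrix.cons_val_three],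
            by norm_num [Matrix.cons_val_two, Matrix.cons_val_three],
            by omega, by omega, by omega⟩
        · exact ⟨0, 0, 2, 2, by norm_num, by norm_num, by norm_num [Matrix.cons_val_two, Matrix.cons_val_three],
            by norm_num [Matrix.cons_val_two, Matrix.cons_val_three],
            by omega, by omega, by omega⟩
        · exact ⟨1, 1, 1, 1, by norm_num, by norm_num, by norm_num [Matrix.cons_val_two, Matrix.cons_val_three],
            by norm_num [Matrix.cons_val_two, Matrix.cons_val_three],
            by omega, by omega, by omega⟩
    exact this hx
  · rintro ⟨a, b, c, d, hx0, hx1, hx2, hx3, ⟨m, hm⟩, ⟨k, hk⟩, ⟨n, hn⟩⟩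
    have hv : (![1/4, 1/4, 1/4, 1/4] : Fin 4 → ℝ) ∈ L' :=
      AddSubgroup.subset_closure (Or.inr (by simp))
    have hw : (![0, 0, 1/2, 1/2] : Fin 4 → ℝ) ∈ L' :=
      AddSubgroup.subset_closure (Or.inr (by simp))
    have hz : (![0, (m:ℝ), 0, (n:ℝ)] : Fin 4 → ℝ) ∈ L' := by
      apply AddSubgroup.subset_closure
      left
      intro i
      fin_cases i
      · exact ⟨0, by simp⟩
      · exact ⟨m, by simp⟩
      · exact ⟨0, by simp⟩
      · exact ⟨n, by simp⟩
    have hm' : (b:ℝ) - a = 4*m := by exact_mod_cast hm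
    have hk' : (c:ℝ) - a = 2*k := by exact_mod_cast hk
    have hn' : (d:ℝ) - c = 4*n := by exact_mod_cast hn
    have hx : x = a • ![1/4, 1/4, 1/4, 1/4] + k • ![0, 0, 1/2, 1/2] + ![0, (m:ℝ), 0, (n:ℝ)] := by
      funext i
      fin_cases i <;> simp <;> push_cast at * <;> linarith
    rw [hx]
    exact AddSubgroup.add_mem _ (AddSubgroup.add_mem _ (AddSubgroup.zsmul_mem _ hv a)
      (AddSubgroup.zsmul_mem _ hw k)) hz

def T : Finset (ℤ × ℤ × ℤ × ℤ) :=
  {(4,0,0,0),(-4,0,0,0),(0,4,0,0),(0,-4,0,0),(0,0,4,0),(0,0,-4,0),(0,0,0,4),(0,0,0,-4),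
   (2,2,0,0),(2,-2,0,0),(-2,2,0,0),(-2,-2,0,0),(0,0,2,2),(0,0,2,-2),(0,0,-2,2),(0,0,-2,-2),
   (1,1,1,1),(1,1,-1,-1),(-1,-1,1,1),(-1,-1,-1,-1)}

lemma keyAux : ∀ a ∈ Finset.Icc (-4:ℤ) 4, ∀ b ∈ Finset.Icc (-4:ℤ) 4, ∀ c ∈ Finset.Icc (-4:ℤ) 4,
    ∀ d ∈ Finset.Icc (-4:ℤ) 4, |a|+|b|+|c|+|d| = 4 → 4 ∣ b - a → 2 ∣ c - a → 4 ∣ d - c →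
    (a,b,c,d) ∈ T := by decide

lemma key (a b c d : ℤ) (h1 : |a| + |b| + |c| + |d| = 4)
    (h2 : (4:ℤ) ∣ b - a) (h3 : (2:ℤ) ∣ c - a) (h4 : (4:ℤ) ∣ d - c) :
    (a, b, c, d) ∈ T := by
  have na := abs_nonneg a; have nb := abs_nonneg b
  have nc := abs_nonneg c; have nd := abs_nonneg d
  have ba := abs_le.mp (show |a| ≤ 4 by linarith)
  have bb := abs_le.mp (show |b| ≤ 4 by linarith)
  have bc := abs_le.mp (show |c| ≤ 4 by linarith)
  have bd := abs_le.mp (show |d| ≤ 4 by linarith)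
  exact keyAux a (Finset.mem_Icc.mpr ba) b (Finset.mem_Icc.mpr bb) c (Finset.mem_Icc.mpr bc)
    d (Finset.mem_Icc.mpr bd) h1 h2 h3 h4

lemma key2 (a b c d : ℤ) (h0 : ¬(a = 0 ∧ b = 0 ∧ c = 0 ∧ d = 0))
    (h2 : (4:ℤ) ∣ b - a) (h3 : (2:ℤ) ∣ c - a) (h4 : (4:ℤ) ∣ d - c) :
    4 ≤ |a| + |b| + |c| + |d| := by
  rcases abs_cases a with ⟨ha, ha'⟩ | ⟨ha, ha'⟩ <;>
  rcases abs_cases b with ⟨hb, hb'⟩ | ⟨hb, hb'⟩ <;>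
  rcases abs_cases c with ⟨hc, hc'⟩ | ⟨hc, hc'⟩ <;>
  rcases abs_cases d with ⟨hd, hd'⟩ | ⟨hd, hd'⟩ <;>
  rw [ha, hb, hc, hd] <;> omega

lemma Tprop : ∀ p ∈ T, ((4:ℤ) ∣ p.2.1 - p.1) ∧ ((2:ℤ) ∣ p.2.2.1 - p.1) ∧
    ((4:ℤ) ∣ p.2.2.2 - p.2.2.1) ∧ |p.1| + |p.2.1| + |p.2.2.1| + |p.2.2.2| = 4 := by
  decide

noncomputable def g (p : ℤ × ℤ × ℤ × ℤ) : Fin 4 → ℝ :=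
  ![(p.1:ℝ)/4, (p.2.1:ℝ)/4, (p.2.2.1:ℝ)/4, (p.2.2.2:ℝ)/4]

lemma l1_eq (x : Fin 4 → ℝ) : l1 x = |x 0| + |x 1| + |x 2| + |x 3| := by
  simp [l1, Fin.sum_univ_four]

lemma g_inj : Function.Injective g := by
  rintro ⟨a,b,c,d⟩ ⟨a',b',c',d'⟩ h
  have h0 := congrFun h 0
  have h1 := congrFun h 1
  have h2 := congrFun h 2
  have h3 := congrFun h 3
  simp only [g, Matrix.cons_val] at h0 h1 h2 h3
  field_simp at h0 h1 h2 h3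
  have e0 : a = a' := by exact_mod_cast h0
  have e1 : b = b' := by exact_mod_cast h1
  have e2 : c = c' := by exact_mod_cast h2
  have e3 : d = d' := by exact_mod_cast h3
  simp [e0, e1, e2, e3]

lemma g_l1 (p : ℤ × ℤ × ℤ × ℤ) :
    l1 (g p) = (|p.1| + |p.2.1| + |p.2.2.1| + |p.2.2.2| : ℤ) / 4 := by
  have habs : ∀ m : ℤ, |(m:ℝ)/4| = (|m| : ℤ)/4 := by
    intro m
    rw [abs_div]
    push_cast
    norm_num
  rw [l1_eq]
  simp only [g]
  norm_num [habs, Matrix.cons_val_two, Matrix.cons_val_three]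
  ring

lemma g_memL' (p : ℤ × ℤ × ℤ × ℤ) (hp : p ∈ T) : g p ∈ L' := by
  obtain ⟨e1, e2, e3, _⟩ := Tprop p hp
  rw [memL'_iff]
  refine ⟨p.1, p.2.1, p.2.2.1, p.2.2.2, ?_, ?_, ?_, ?_, e1, e2, e3⟩ <;>
    simp [g] <;> ring

lemma setEq : {x : Fin 4 → ℝ | x ∈ L' ∧ l1 x = 1} = g '' ↑T := by
  ext x
  simp only [Set.mem_setOf_eq, Set.mem_image, Finset.mem_coe]
  constructor
  · rintro ⟨hx, hl⟩
    obtain ⟨a,b,c,d,h0,h1,h2,h3,d1,d2,d3⟩ := (memL'_iff x).1 hx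
    rw [l1_eq] at hl
    have habs : |a| + |b| + |c| + |d| = 4 := by
      have e0 : |(a:ℝ)| = 4 * |x 0| := by rw [← h0, abs_mul]; norm_num
      have e1 : |(b:ℝ)| = 4 * |x 1| := by rw [← h1, abs_mul]; norm_num
      have e2 : |(c:ℝ)| = 4 * |x 2| := by rw [← h2, abs_mul]; norm_num
      have e3 : |(d:ℝ)| = 4 * |x 3| := by rw [← h3, abs_mul]; norm_num
      have : (|a| + |b| + |c| + |d| : ℝ) = 4 := by push_cast [e0, e1, e2, e3]; linarith
      exact_mod_cast this
    refine ⟨(a,b,c,d), key a b c d habs d1 d2 d3, ?_⟩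
    funext i
    fin_cases i <;> simp [g] <;> linarith
  · rintro ⟨p, hp, rfl⟩
    refine ⟨g_memL' p hp, ?_⟩
    rw [g_l1]
    obtain ⟨_, _, _, e4⟩ := Tprop p hp
    rw [e4]
    norm_num

theorem stmt13 :
    Set.ncard {x : Fin 4 → ℝ | x ∈ L' ∧ l1 x = 1} = 20 ∧
    IsLeast {r : ℝ | ∃ x ∈ L', x ≠ 0 ∧ l1 x = r} 1 := by
  constructor
  · rw [setEq, Set.ncard_image_of_injective _ g_inj, Set.ncard_coe_finset]
    decide
  · constructor
    · refine ⟨g (4,0,0,0), g_memL' _ (by decide), ?_, ?_⟩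
      · intro h
        have := congrFun h 0
        simp [g] at this
      · rw [g_l1]; norm_num
    · rintro r ⟨x, hx, hne, rfl⟩
      obtain ⟨a,b,c,d,h0,h1,h2,h3,d1,d2,d3⟩ := (memL'_iff x).1 hx
      have hnz : ¬(a = 0 ∧ b = 0 ∧ c = 0 ∧ d = 0) := by
        rintro ⟨rfl, rfl, rfl, rfl⟩
        apply hne
        funext i
        fin_cases i <;> simp <;> push_cast at h0 h1 h2 h3 <;> linarith
      have h4 := key2 a b c d hnz d1 d2 d3
      have h4' : (4:ℝ) ≤ |(a:ℝ)| + |(b:ℝ)| + |(c:ℝ)| + |(d:ℝ)| := by exact_mod_cast h4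
      have e0 : |(a:ℝ)| = 4 * |x 0| := by rw [← h0, abs_mul]; norm_num
      have e1 : |(b:ℝ)| = 4 * |x 1| := by rw [← h1, abs_mul]; norm_num
      have e2 : |(c:ℝ)| = 4 * |x 2| := by rw [← h2, abs_mul]; norm_num
      have e3 : |(d:ℝ)| = 4 * |x 3| := by rw [← h3, abs_mul]; norm_num
      rw [l1_eq]
      linarith
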